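/- arXiv:2501.13519 — 4 statements merged into one kernel-verified Lean document; each statement's English description precedes it below -/
import Mathlib

section
/- Let a, b ∈ ℤ be such that f(x) = x⁸ + a x⁶ + b x⁴ + a x² + 1 is irreducible over ℚ, let α be a root of f, and K = ℚ(α). Then δ := α² + α^{−2} satisfies δ² + aδ + (b − 2) = 0; the field M := ℚ(δ) is a quadratic extension of ℚ, namely M = ℚ(√(a² − 4b + 8)); and the minimal polynomial of α over M is h(x) = x⁴ − δ x² + 1, so that [K : M] = 4. -/
/-!
Dividing `f(α) = 0` by `α⁴` gives the quadratic equation for `δ`, and `α` is visibly a root of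
`x⁴ - δx² + 1` over `ℚ(δ)`. Hence `[ℚ(δ) : ℚ] ≤ 2` and `[K : ℚ(δ)] ≤ 4`, while `[K : ℚ] = 8` by
irreducibility of `f`, so the tower law forces both bounds to be equalities; in particular
`x⁴ - δx² + 1` is the minimal polynomial. Completing the square, `(2δ + a)² = a² - 4b + 8`.
-/

open NumberField Polynomial IntermediateField

theorem add_inv_quadratic_of_palindromic_quartic {K : Type*} [Field K] {a b x : K} (hx : x ≠ 0)
    (h : x ^ 4 + a * x ^ 3 + b * x ^ 2 + a * x + 1 = 0) :
    (x + x⁻¹) ^ 2 + a * (x + x⁻¹) + (b - 2) = 0 := by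
  field_simp
  linear_combination h

theorem sq_sub_add_inv_mul_add_one {K : Type*} [Field K] {x : K} (hx : x ≠ 0) :
    x ^ 2 - (x + x⁻¹) * x + 1 = 0 := by
  field_simp
  ring

namespace IntermediateField

variable {F E : Type*} [Field F] [Field E] [Algebra F E]

theorem adjoin_simple_mul_add_algebraMap {u : F} (hu : u ≠ 0) (c : F) (x : E) :
    F⟮algebraMap F E u * x + algebraMap F E c⟯ = F⟮x⟯ := by
  apply le_antisymm
  · rw [adjoin_simple_le_iff]
    exact add_mem (mul_mem (algebraMap_mem _ u) (mem_adjoin_simple_self F x)) (algebraMap_mem _ c)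
  · set y := algebraMap F E u * x + algebraMap F E c
    have hx : x = algebraMap F E u⁻¹ * (y - algebraMap F E c) := by
      rw [add_sub_cancel_right, ← mul_assoc, ← map_mul, inv_mul_cancel₀ hu, map_one, one_mul]
    rw [adjoin_simple_le_iff, hx]
    exact mul_mem (algebraMap_mem _ _) (sub_mem (mem_adjoin_simple_self F y) (algebraMap_mem _ c))

theorem finrank_adjoin_simple_le_natDegree {x : E} {p : F[X]} (hp : p ≠ 0) (hx : aeval x p = 0) :
    Module.finrank F F⟮x⟯ ≤ p.natDegree := by
  rw [adjoin.finrank (IsAlgebraic.isIntegral ⟨p, hp, hx⟩)]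
  exact natDegree_le_of_dvd (minpoly.dvd F x hx) hp

end IntermediateField

theorem minpoly.eq_of_natDegree_le_finrank_adjoin {F E : Type*} [Field F] [Field E] [Algebra F E]
    {x : E} {p : F[X]} (hmonic : p.Monic) (hx : Polynomial.aeval x p = 0)
    (hdeg : p.natDegree ≤ Module.finrank F F⟮x⟯) : minpoly F x = p := by
  have hint : IsIntegral F x := IsAlgebraic.isIntegral ⟨p, hmonic.ne_zero, hx⟩
  rw [adjoin.finrank hint] at hdeg
  exact (eq_of_monic_of_dvd_of_natDegree_le (minpoly.monic hint) hmonic (minpoly.dvd F x hx)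
    hdeg).symm

/-- Let `f(x) = x⁸ + a x⁶ + b x⁴ + a x² + 1` be irreducible over `ℚ`, `α` a
root, `K = ℚ(α)`. Then `δ = α² + α⁻²` satisfies `δ² + aδ + (b−2) = 0`; `M = ℚ(δ)` is a
quadratic extension of `ℚ`, namely `M = ℚ(√(a²−4b+8))`; and the minimal polynomial of `α`
over `M` is `x⁴ − δx² + 1`, so `[K : M] = 4`. -/
theorem stmt6 (a b : ℤ) (K : Type*) [Field K] [NumberField K]
    (hirr : Irreducible (X ^ 8 + C (a : ℚ) * X ^ 6 + C (b : ℚ) * X ^ 4 + C (a : ℚ) * X ^ 2 + 1 :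
      Polynomial ℚ))
    (α : K)
    (hroot : Polynomial.aeval α (X ^ 8 + C a * X ^ 6 + C b * X ^ 4 + C a * X ^ 2 + 1 :
      Polynomial ℤ) = 0)
    (hK : IntermediateField.adjoin ℚ {α} = ⊤)
    (δ : K) (hδ : δ = α ^ 2 + (α ^ 2)⁻¹) :
    δ ^ 2 + (a : K) * δ + ((b : K) - 2) = 0 ∧
    Module.finrank ℚ (IntermediateField.adjoin ℚ {δ} : IntermediateField ℚ K) = 2 ∧
    (∃ s : K, s ^ 2 = ((a ^ 2 - 4 * b + 8 : ℤ) : K) ∧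
      IntermediateField.adjoin ℚ {δ} = IntermediateField.adjoin ℚ {s}) ∧
    minpoly (IntermediateField.adjoin ℚ {δ} : IntermediateField ℚ K) α =
      X ^ 4 - C (⟨δ, IntermediateField.mem_adjoin_simple_self ℚ δ⟩ :
        IntermediateField.adjoin ℚ {δ}) * X ^ 2 + 1 ∧
    Module.finrank (IntermediateField.adjoin ℚ {δ} : IntermediateField ℚ K) K = 4 := by
  have hα : α ≠ 0 := by
    rintro rfl
    simp at hroot
  have hf : (α ^ 2) ^ 4 + (a : K) * (α ^ 2) ^ 3 + (b : K) * (α ^ 2) ^ 2 + (a : K) * α ^ 2 + 1 =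
      0 := by
    simpa [← pow_mul] using hroot
  have hquad : δ ^ 2 + (a : K) * δ + ((b : K) - 2) = 0 :=
    hδ ▸ add_inv_quadratic_of_palindromic_quartic (pow_ne_zero 2 hα) hf
  have hminα :
      minpoly ℚ α = X ^ 8 + C (a : ℚ) * X ^ 6 + C (b : ℚ) * X ^ 4 + C (a : ℚ) * X ^ 2 + 1 :=
    (minpoly.eq_of_irreducible_of_monic hirr (by simpa using hroot) (by monicity!)).symm
  have hK8 : Module.finrank ℚ K = 8 := by
    rw [← (Field.primitive_element_iff_minpoly_natDegree_eq ℚ α).mp hK, hminα]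
    compute_degree!
  set M := ℚ⟮δ⟯
  set δM : M := ⟨δ, mem_adjoin_simple_self ℚ δ⟩
  have hM2 : Module.finrank ℚ M ≤ 2 := by
    refine (finrank_adjoin_simple_le_natDegree (p := X ^ 2 + C (a : ℚ) * X + C ((b : ℚ) - 2))
      (Monic.ne_zero (by monicity!)) (by simpa using hquad)).trans ?_
    compute_degree!
  have hMα : Module.finrank M M⟮α⟯ = Module.finrank M K := by
    rw [adjoin_eq_top_of_adjoin_eq_top ℚ hK, finrank_top']
  have hroot4 : aeval α (X ^ 4 - C δM * X ^ 2 + 1) = 0 := by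
    simpa [← pow_mul, hδ, δM] using sq_sub_add_inv_mul_add_one (pow_ne_zero 2 hα)
  have hK4 : Module.finrank M K ≤ 4 := by
    rw [← hMα]
    refine (finrank_adjoin_simple_le_natDegree (Monic.ne_zero (by monicity!)) hroot4).trans ?_
    compute_degree!
  obtain ⟨hM, hMK⟩ : Module.finrank ℚ M = 2 ∧ Module.finrank M K = 4 := by
    have htower := Module.finrank_mul_finrank ℚ M K
    rw [hK8] at htower
    interval_cases Module.finrank ℚ M <;> omega
  refine ⟨hquad, hM, ⟨2 * δ + a, by push_cast; linear_combination 4 * hquad, ?_⟩, ?_, hMK⟩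
  · simpa using (adjoin_simple_mul_add_algebraMap two_ne_zero (a : ℚ) δ).symm
  · refine minpoly.eq_of_natDegree_le_finrank_adjoin (by monicity!) hroot4 ?_
    rw [hMα, hMK]
    compute_degree!
end

section
/- Let δ ∈ ℂ and let α^{(1)}, α^{(2)}, α^{(3)}, α^{(4)} ∈ ℂ be the roots (with multiplicity) of x⁴ − δx² + 1. Let P, Q ∈ ℂ with |∏_{j=1}^{4} (P − α^{(j)}Q)| = 1 and |Q| ≥ 10. Let i₀ be an index at which |P − α^{(j)}Q| attains its minimum over j ∈ {1,2,3,4}, and assume |α^{(j)} − α^{(i₀)}| > 0.1 for every j ≠ i₀. Then |P − α^{(i₀)}Q| ≤ |Q|^{−3} / ∏_{j ≠ i₀} (|α^{(j)} − α^{(i₀)}| − 0.1). -/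
/-!
Since the product of the `n` factors `‖P - αⱼ Q‖` is `1` and the `i₀`-th one is the smallest,
it is at most `1`, hence at most `ε ‖Q‖`. The triangle inequality then bounds every other
factor from below by `(‖αⱼ - α_{i₀}‖ - ε) ‖Q‖`, and dividing `1` by the product of these
`n - 1` lower bounds bounds the smallest factor from above.
-/

open Finset Polynomial

theorem le_one_of_prod_eq_one_of_forall_le {ι : Type*} [Fintype ι] {f : ι → ℝ}
    (hf : ∀ j, 0 ≤ f j) (hprod : ∏ j, f j = 1) (i₀ : ι) (hmin : ∀ j, f i₀ ≤ f j) :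
    f i₀ ≤ 1 := by
  have hpow : f i₀ ^ Fintype.card ι ≤ 1 := by
    calc f i₀ ^ Fintype.card ι = ∏ _j : ι, f i₀ := by rw [prod_const, card_univ]
      _ ≤ ∏ j, f j := prod_le_prod (fun _ _ => hf i₀) (fun j _ => hmin j)
      _ = 1 := hprod
  have : Nonempty ι := ⟨i₀⟩
  exact (pow_le_one_iff_of_nonneg (hf i₀) Fintype.card_ne_zero).mp hpow

theorem sub_mul_le_norm_sub_mul {K : Type*} [NormedDivisionRing K] {a b P Q : K} {ε : ℝ}
    (h : ‖P - a * Q‖ ≤ ε * ‖Q‖) : (‖b - a‖ - ε) * ‖Q‖ ≤ ‖P - b * Q‖ := by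
  have htri : ‖(b - a) * Q‖ ≤ ‖P - b * Q‖ + ‖P - a * Q‖ := by
    calc ‖(b - a) * Q‖ = ‖(P - a * Q) - (P - b * Q)‖ := by congr 1; noncomm_ring
      _ ≤ ‖P - a * Q‖ + ‖P - b * Q‖ := norm_sub_le _ _
      _ = ‖P - b * Q‖ + ‖P - a * Q‖ := add_comm _ _
  rw [norm_mul] at htri
  linarith

theorem norm_sub_mul_le_of_norm_prod_eq_one {K ι : Type*} [NormedField K] [Fintype ι]
    [DecidableEq ι] (α : ι → K) (P Q : K) (ε : ℝ)
    (hPQ : ‖∏ j, (P - α j * Q)‖ = 1) (hQ : 1 ≤ ε * ‖Q‖) (i₀ : ι)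
    (hmin : ∀ j, ‖P - α i₀ * Q‖ ≤ ‖P - α j * Q‖)
    (hsep : ∀ j, j ≠ i₀ → ε < ‖α j - α i₀‖) :
    ‖P - α i₀ * Q‖ ≤
      (‖Q‖ ^ (Fintype.card ι - 1))⁻¹ / ∏ j ∈ univ.erase i₀, (‖α j - α i₀‖ - ε) := by
  set m := ‖P - α i₀ * Q‖
  set D := ∏ j ∈ univ.erase i₀, (‖α j - α i₀‖ - ε)
  have hprod : ∏ j, ‖P - α j * Q‖ = 1 := by rw [← norm_prod, hPQ]
  have hm1 : m ≤ 1 :=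
    le_one_of_prod_eq_one_of_forall_le (fun _ => norm_nonneg _) hprod i₀ hmin
  have hQ0 : 0 < ‖Q‖ := norm_pos_iff.mpr (by rintro rfl; norm_num at hQ)
  have hD0 : 0 < D := prod_pos fun j hj => sub_pos.mpr (hsep j (ne_of_mem_erase hj))
  have hlow : D * ‖Q‖ ^ (Fintype.card ι - 1) ≤ ∏ j ∈ univ.erase i₀, ‖P - α j * Q‖ := by
    calc D * ‖Q‖ ^ (Fintype.card ι - 1)
        = ∏ j ∈ univ.erase i₀, ((‖α j - α i₀‖ - ε) * ‖Q‖) := by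
          rw [prod_mul_distrib, prod_const, card_erase_of_mem (mem_univ _), card_univ]
      _ ≤ ∏ j ∈ univ.erase i₀, ‖P - α j * Q‖ := by
          refine prod_le_prod (fun j hj => ?_) (fun j _ => ?_)
          · exact mul_nonneg (sub_pos.mpr (hsep j (ne_of_mem_erase hj))).le hQ0.le
          · exact sub_mul_le_norm_sub_mul (hm1.trans hQ)
  have hsplit : m * ∏ j ∈ univ.erase i₀, ‖P - α j * Q‖ = 1 := by
    rw [mul_prod_erase univ (fun j => ‖P - α j * Q‖) (mem_univ i₀), hprod]
  rw [← one_div, div_div, le_div_iff₀ (by positivity), mul_comm (‖Q‖ ^ _)]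
  calc m * (D * ‖Q‖ ^ (Fintype.card ι - 1))
      ≤ m * ∏ j ∈ univ.erase i₀, ‖P - α j * Q‖ := mul_le_mul_of_nonneg_left hlow (norm_nonneg _)
    _ = 1 := hsplit

theorem stmt13_general (α : Fin 4 → ℂ)
    (P Q : ℂ)
    (hPQ : ‖∏ j : Fin 4, (P - α j * Q)‖ = 1)
    (hQ : 10 ≤ ‖Q‖)
    (i₀ : Fin 4)
    (hmin : ∀ j : Fin 4, ‖P - α i₀ * Q‖ ≤ ‖P - α j * Q‖)
    (hsep : ∀ j : Fin 4, j ≠ i₀ → (0.1 : ℝ) < ‖α j - α i₀‖) :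
    ‖P - α i₀ * Q‖ ≤
      (‖Q‖) ^ (-3 : ℤ) /
        ∏ j ∈ Finset.univ.filter (fun j : Fin 4 => j ≠ i₀),
          (‖α j - α i₀‖ - 0.1) := by
  have hεQ : 1 ≤ (0.1 : ℝ) * ‖Q‖ := by linarith
  rw [filter_ne', zpow_neg, zpow_ofNat]
  exact norm_sub_mul_le_of_norm_prod_eq_one α P Q 0.1 hPQ hεQ i₀ hmin hsep

/-- Let `α⁽¹⁾,…,α⁽⁴⁾` be the roots (with multiplicity) of `x⁴ − δx² + 1`,
and let `P, Q ∈ ℂ` with `|∏ⱼ (P − α⁽ʲ⁾Q)| = 1` and `|Q| ≥ 10`. If `i₀` minimizes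
`|P − α⁽ʲ⁾Q|` and `|α⁽ʲ⁾ − α⁽ⁱ⁰⁾| > 0.1` for `j ≠ i₀`, then
`|P − α⁽ⁱ⁰⁾Q| ≤ |Q|⁻³ / ∏_{j ≠ i₀} (|α⁽ʲ⁾ − α⁽ⁱ⁰⁾| − 0.1)`. -/
theorem stmt13 (δ : ℂ) (α : Fin 4 → ℂ)
    (hroots : (X ^ 4 - C δ * X ^ 2 + 1 : Polynomial ℂ) = ∏ j : Fin 4, (X - C (α j)))
    (P Q : ℂ)
    (hPQ : ‖∏ j : Fin 4, (P - α j * Q)‖ = 1)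
    (hQ : 10 ≤ ‖Q‖)
    (i₀ : Fin 4)
    (hmin : ∀ j : Fin 4, ‖P - α i₀ * Q‖ ≤ ‖P - α j * Q‖)
    (hsep : ∀ j : Fin 4, j ≠ i₀ → (0.1 : ℝ) < ‖α j - α i₀‖) :
    ‖P - α i₀ * Q‖ ≤
      (‖Q‖) ^ (-3 : ℤ) /
        ∏ j ∈ Finset.univ.filter (fun j : Fin 4 => j ≠ i₀),
          (‖α j - α i₀‖ - 0.1) :=
  stmt13_general α P Q hPQ hQ i₀ hmin hsep
end

section
/- Let a, b ∈ ℤ with m := a² − 4b + 8 < 0. Set δ = (−a + i√|m|)/2 and δ̄ = (−a − i√|m|)/2 in ℂ. Let α₁, α₂, α₃, α₄ ∈ ℂ be the roots (with multiplicity) of x⁴ − δx² + 1 and β₁, β₂, β₃, β₄ ∈ ℂ the roots of x⁴ − δ̄x² + 1. Then ∏_{j=1}^{4} ∏_{k=1}^{4} | (α_j³ − δα_j) − (β_k³ − δ̄β_k) | = m². -/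
/-!
On a root `x` of the palindromic quartic `x⁴ - d x² + 1` one has `x³ - d x = -x⁻¹`, so every
factor of the product is `β⁻¹ - α⁻¹ = (α - β) / (α β)`. The product over `k` of `α - β k` is
`(X⁴ - δ' X² + 1)(α) = (δ - δ') α²`, and the roots of either quartic multiply to `1`; hence the
product of all sixteen factors is `(δ - δ')⁴ = (i √|m|)⁴ = m²`.
-/

open Polynomial

section Quartic

variable {K : Type*} [Field K]

theorem ne_zero_of_quartic_eq_zero {d x : K} (hx : x ^ 4 - d * x ^ 2 + 1 = 0) : x ≠ 0 := by
  rintro rfl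
  norm_num at hx

theorem cube_sub_mul_eq_neg_inv_of_quartic_eq_zero {d x : K} (hx : x ^ 4 - d * x ^ 2 + 1 = 0) :
    x ^ 3 - d * x = -x⁻¹ := by
  have hx0 := ne_zero_of_quartic_eq_zero hx
  field_simp
  linear_combination hx

theorem Finset.prod_inv_sub_inv {ι : Type*} [Fintype ι] {x : K} (hx : x ≠ 0) {β : ι → K}
    (hβ : ∀ k, β k ≠ 0) :
    ∏ k, ((β k)⁻¹ - x⁻¹) = (∏ k, (x - β k)) / ((∏ k, β k) * x ^ Fintype.card ι) := by
  rw [Finset.prod_congr rfl fun k _ => inv_sub_inv (hβ k) hx, Finset.prod_div_distrib,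
    Finset.prod_mul_distrib, Finset.prod_const, Finset.card_univ]

section Factorization

variable {R : Type*} [CommRing R] {d : R} {r : Fin 4 → R}
  (hr : (X ^ 4 - C d * X ^ 2 + 1 : R[X]) = ∏ j, (X - C (r j)))
include hr

theorem quartic_eq_prod_of_eq_prod (x : R) : x ^ 4 - d * x ^ 2 + 1 = ∏ j, (x - r j) := by
  simpa [eval_prod] using congrArg (eval x) hr

theorem quartic_root_eq_zero_of_eq_prod (j : Fin 4) : r j ^ 4 - d * r j ^ 2 + 1 = 0 := by
  rw [quartic_eq_prod_of_eq_prod hr]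
  exact Finset.prod_eq_zero (Finset.mem_univ j) (sub_self _)

theorem prod_quartic_roots_of_eq_prod : ∏ j, r j = 1 := by
  have h := quartic_eq_prod_of_eq_prod hr 0
  simp only [Fin.prod_univ_four] at h ⊢
  linear_combination -h

end Factorization

theorem prod_prod_cube_sub_mul_sub_eq_pow_four {δ δ' : K} {α β : Fin 4 → K}
    (hα : (X ^ 4 - C δ * X ^ 2 + 1 : K[X]) = ∏ j, (X - C (α j)))
    (hβ : (X ^ 4 - C δ' * X ^ 2 + 1 : K[X]) = ∏ k, (X - C (β k))) :
    ∏ j, ∏ k, ((α j ^ 3 - δ * α j) - (β k ^ 3 - δ' * β k)) = (δ - δ') ^ 4 := by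
  have hβ0 k := ne_zero_of_quartic_eq_zero (quartic_root_eq_zero_of_eq_prod hβ k)
  have row (j : Fin 4) :
      ∏ k, ((α j ^ 3 - δ * α j) - (β k ^ 3 - δ' * β k)) = (δ - δ') / α j ^ 2 := by
    have hαj := quartic_root_eq_zero_of_eq_prod hα j
    have hαj0 := ne_zero_of_quartic_eq_zero hαj
    simp_rw [cube_sub_mul_eq_neg_inv_of_quartic_eq_zero hαj,
      cube_sub_mul_eq_neg_inv_of_quartic_eq_zero (quartic_root_eq_zero_of_eq_prod hβ _),
      neg_sub_neg]
    rw [Finset.prod_inv_sub_inv hαj0 hβ0, ← quartic_eq_prod_of_eq_prod hβ,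
      prod_quartic_roots_of_eq_prod hβ, Fintype.card_fin]
    field_simp
    linear_combination hαj
  calc ∏ j, ∏ k, ((α j ^ 3 - δ * α j) - (β k ^ 3 - δ' * β k))
      = ∏ j, (δ - δ') / α j ^ 2 := Finset.prod_congr rfl fun j _ => row j
    _ = (δ - δ') ^ 4 / (∏ j, α j) ^ 2 := by
      rw [Finset.prod_div_distrib, Finset.prod_const, Finset.prod_pow, Finset.card_univ,
        Fintype.card_fin]
    _ = (δ - δ') ^ 4 := by rw [prod_quartic_roots_of_eq_prod hα, one_pow, div_one]

end Quartic

theorem stmt14_general (a b : ℤ)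
    (δ δ' : ℂ)
    (hδ : δ = (-(a : ℂ) + Complex.I * (Real.sqrt |(a ^ 2 - 4 * b + 8 : ℤ)| : ℝ)) / 2)
    (hδ' : δ' = (-(a : ℂ) - Complex.I * (Real.sqrt |(a ^ 2 - 4 * b + 8 : ℤ)| : ℝ)) / 2)
    (α β : Fin 4 → ℂ)
    (hα : (X ^ 4 - C δ * X ^ 2 + 1 : Polynomial ℂ) = ∏ j : Fin 4, (X - C (α j)))
    (hβ : (X ^ 4 - C δ' * X ^ 2 + 1 : Polynomial ℂ) = ∏ k : Fin 4, (X - C (β k))) :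
    (∏ j : Fin 4, ∏ k : Fin 4,
        ‖(α j ^ 3 - δ * α j) - (β k ^ 3 - δ' * β k)‖) =
      (((a ^ 2 - 4 * b + 8 : ℤ) ^ 2 : ℤ) : ℝ) := by
  have hdiff : δ - δ' = Complex.I * (Real.sqrt |(a ^ 2 - 4 * b + 8 : ℤ)| : ℝ) := by
    rw [hδ, hδ']; ring
  calc ∏ j, ∏ k, ‖(α j ^ 3 - δ * α j) - (β k ^ 3 - δ' * β k)‖
      = ‖∏ j, ∏ k, ((α j ^ 3 - δ * α j) - (β k ^ 3 - δ' * β k))‖ := by simp only [norm_prod]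
    _ = ‖(δ - δ') ^ 4‖ := by rw [prod_prod_cube_sub_mul_sub_eq_pow_four hα hβ]
    _ = Real.sqrt |(a ^ 2 - 4 * b + 8 : ℤ)| ^ 4 := by
      rw [hdiff, norm_pow, norm_mul, Complex.norm_I, one_mul, Complex.norm_real,
        Real.norm_of_nonneg (Real.sqrt_nonneg _)]
    _ = (((a ^ 2 - 4 * b + 8 : ℤ) ^ 2 : ℤ) : ℝ) := by
      rw [show 4 = 2 * 2 from rfl, pow_mul, Real.sq_sqrt (by positivity)]
      push_cast
      exact sq_abs _

/-- Let `m = a² − 4b + 8 < 0`, `δ = (−a + i√|m|)/2`, `δ̄ = (−a − i√|m|)/2`.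
If `α₁,…,α₄` are the roots of `x⁴ − δx² + 1` and `β₁,…,β₄` the roots of `x⁴ − δ̄x² + 1`,
then `∏ⱼ ∏ₖ |(αⱼ³ − δαⱼ) − (βₖ³ − δ̄βₖ)| = m²`. -/
theorem stmt14 (a b : ℤ) (hm : a ^ 2 - 4 * b + 8 < 0)
    (δ δ' : ℂ)
    (hδ : δ = (-(a : ℂ) + Complex.I * (Real.sqrt |(a ^ 2 - 4 * b + 8 : ℤ)| : ℝ)) / 2)
    (hδ' : δ' = (-(a : ℂ) - Complex.I * (Real.sqrt |(a ^ 2 - 4 * b + 8 : ℤ)| : ℝ)) / 2)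
    (α β : Fin 4 → ℂ)
    (hα : (X ^ 4 - C δ * X ^ 2 + 1 : Polynomial ℂ) = ∏ j : Fin 4, (X - C (α j)))
    (hβ : (X ^ 4 - C δ' * X ^ 2 + 1 : Polynomial ℂ) = ∏ k : Fin 4, (X - C (β k))) :
    (∏ j : Fin 4, ∏ k : Fin 4,
        ‖(α j ^ 3 - δ * α j) - (β k ^ 3 - δ' * β k)‖) =
      (((a ^ 2 - 4 * b + 8 : ℤ) ^ 2 : ℤ) : ℝ) :=
  stmt14_general a b δ δ' hδ hδ' α β hα hβ
end

section
/- Let a, b ∈ ℤ be such that f(x) = x⁸ + a x⁶ + b x⁴ + a x² + 1 is irreducible over ℚ, let α be a root, K = ℚ(α), and assume ℤ[α] = ℤ_K (i.e., (1, α, α², …, α⁷) is an integral basis of K). Let M = ℚ(α² + α^{−2}) be the quadratic subfield of K with ring of integers ℤ_M. Then ℤ_K is a free ℤ_M-module with basis (1, α, α², α³); in particular every γ ∈ ℤ_K can be written uniquely as γ = C + Xα + Yα² + Zα³ with C, X, Y, Z ∈ ℤ_M. -/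
open NumberField Polynomial

/-!
As `α` is a unit, `α⁻² = -(α⁶ + aα⁴ + bα² + a)`, so `δ = α² + α⁻²` is an algebraic integer of `M`;
it satisfies `δ² + aδ + b - 2 = 0`, whence `[M : ℚ] ≤ 2`, and `α⁴ = δα² - 1`. The latter relation
shows that `1, α, α², α³` span `ℤ[α] = 𝓞 K` over `𝓞 M`. As `[K : ℚ] = 8` and `K = M(α)`, the
degree of `α` over `M` is at least `4`, so these powers are linearly independent over `M`, a
fortiori over `𝓞 M`.
-/

section Palindromic

variable {F : Type*} [Field F] {a b x : F}

lemma inv_sq_eq_of_palindromic_octic (hx : x ^ 8 + a * x ^ 6 + b * x ^ 4 + a * x ^ 2 + 1 = 0) :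
    (x ^ 2)⁻¹ = -(x ^ 6 + a * x ^ 4 + b * x ^ 2 + a) :=
  inv_eq_of_mul_eq_one_right (by linear_combination -hx)

lemma ne_zero_of_palindromic_octic (hx : x ^ 8 + a * x ^ 6 + b * x ^ 4 + a * x ^ 2 + 1 = 0) :
    x ≠ 0 := by
  rintro rfl
  norm_num at hx

lemma sq_add_inv_sq_quadratic_of_palindromic_octic
    (hx : x ^ 8 + a * x ^ 6 + b * x ^ 4 + a * x ^ 2 + 1 = 0) :
    (x ^ 2 + (x ^ 2)⁻¹) ^ 2 + a * (x ^ 2 + (x ^ 2)⁻¹) + (b - 2) = 0 := by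
  have := ne_zero_of_palindromic_octic hx
  field_simp
  linear_combination hx

lemma pow_four_eq_sq_add_inv_sq_mul_sq_sub_one (hx : x ≠ 0) :
    x ^ 4 = (x ^ 2 + (x ^ 2)⁻¹) * x ^ 2 - 1 := by
  field_simp
  ring

end Palindromic

lemma NumberField.RingOfIntegers.isIntegral_sq_add_inv_sq_of_palindromic_octic {K : Type*}
    [Field K] {α : 𝓞 K} {a b : ℤ}
    (hα : (α : K) ^ 8 + a * (α : K) ^ 6 + b * (α : K) ^ 4 + a * (α : K) ^ 2 + 1 = 0) :
    IsIntegral ℤ ((α : K) ^ 2 + ((α : K) ^ 2)⁻¹) := by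
  have : (α : K) ^ 2 + ((α : K) ^ 2)⁻¹ =
      ((α ^ 2 - (α ^ 6 + a * α ^ 4 + b * α ^ 2 + a) : 𝓞 K) : K) := by
    rw [inv_sq_eq_of_palindromic_octic hα]
    simp only [map_sub, map_add, map_mul, map_pow, map_intCast]
    ring
  exact this ▸ RingOfIntegers.isIntegral_coe _

lemma IntermediateField.finrank_adjoin_le_two_of_quadratic {F L : Type*} [Field F] [Field L]
    [Algebra F L] {y : L} {c d : F}
    (hy : y ^ 2 + algebraMap F L c * y + algebraMap F L d = 0) :
    Module.finrank F (IntermediateField.adjoin F {y}) ≤ 2 := by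
  have hmonic : (X ^ 2 + C c * X + C d : F[X]).Monic := by monicity!
  have hroot : aeval y (X ^ 2 + C c * X + C d : F[X]) = 0 := by simpa [Algebra.smul_def] using hy
  rw [IntermediateField.adjoin.finrank ⟨_, hmonic, hroot⟩]
  calc (minpoly F y).natDegree ≤ (X ^ 2 + C c * X + C d : F[X]).natDegree :=
        natDegree_le_of_dvd (minpoly.dvd F y hroot) hmonic.ne_zero
    _ ≤ 2 := by compute_degree

lemma Module.finrank_eq_natDegree_of_adjoin_eq_top {F L : Type*} [Field F] [Field L]
    [Algebra F L] {x : L} {p : F[X]} (hirr : Irreducible p) (hmonic : p.Monic) (hx : aeval x p = 0)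
    (htop : IntermediateField.adjoin F {x} = ⊤) : Module.finrank F L = p.natDegree := by
  rw [← IntermediateField.finrank_top', ← htop, IntermediateField.adjoin.finrank ⟨p, hmonic, hx⟩,
    ← minpoly.eq_of_irreducible_of_monic hirr hx hmonic]

lemma IntermediateField.finrank_eq_finrank_mul_natDegree_minpoly {F L : Type*} [Field F]
    [Field L] [Algebra F L] [FiniteDimensional F L] (M : IntermediateField F L) {x : L}
    (hx : IntermediateField.adjoin F {x} = ⊤) :
    Module.finrank F L = Module.finrank F M * (minpoly M x).natDegree := by
  rw [← IntermediateField.adjoin.finrank (IsIntegral.of_finite _ _),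
    IntermediateField.adjoin_eq_top_of_adjoin_eq_top F (E := M) hx, IntermediateField.finrank_top',
    Module.finrank_mul_finrank]

lemma linearIndependent_pow_of_le_natDegree {K S : Type*} [Field K] [Ring S] [Algebra K S]
    (x : S) {n : ℕ} (hn : n ≤ (minpoly K x).natDegree) :
    LinearIndependent K fun i : Fin n => x ^ (i : ℕ) :=
  (linearIndependent_pow x).comp (Fin.castLE hn) (Fin.castLE_injective hn)

lemma NumberField.RingOfIntegers.linearIndependent_of_coe {K L : Type*} [Field K] [Field L]
    [Algebra K L] {ι : Type*} {v : ι → 𝓞 L}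
    (hv : LinearIndependent K fun i => (v i : L)) : LinearIndependent (𝓞 K) v := by
  have : LinearIndependent (𝓞 K) fun i => (v i : L) := hv.restrict_scalars' (𝓞 K)
  exact LinearIndependent.of_comp ((IsScalarTower.toAlgHom (𝓞 K) (𝓞 L) L).toLinearMap) this

lemma Algebra.adjoin_eq_top_of_adjoin_int_eq_top {R A : Type*} [CommRing R] [Ring A]
    [Algebra R A] {s : Set A} (h : Algebra.adjoin ℤ s = ⊤) : Algebra.adjoin R s = ⊤ := by
  refine Algebra.eq_top_iff.mpr fun x => ?_
  have hx : x ∈ Algebra.adjoin ℤ s := h ▸ Algebra.mem_top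
  induction hx using Algebra.adjoin_induction with
  | mem x hx => exact Algebra.subset_adjoin hx
  | algebraMap n => simp
  | add x y _ _ hx hy => exact add_mem hx hy
  | mul x y _ _ hx hy => exact mul_mem hx hy

lemma Algebra.adjoin_le_span_pow_fin_four {R A : Type*} [CommRing R] [CommRing A] [Algebra R A]
    {x : A} {d : R} (hx : x ^ 4 = algebraMap R A d * x ^ 2 - 1) :
    Subalgebra.toSubmodule (Algebra.adjoin R {x}) ≤
      Submodule.span R (Set.range fun i : Fin 4 => x ^ (i : ℕ)) := by
  set S := Submodule.span R (Set.range fun i : Fin 4 => x ^ (i : ℕ))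
  have hpow : ∀ n : ℕ, x ^ n ∈ S := by
    intro n
    induction n using Nat.strong_induction_on with
    | _ n ih =>
      match n, ih with
      | 0, _ | 1, _ | 2, _ | 3, _ => exact Submodule.subset_span ⟨⟨_, by omega⟩, rfl⟩
      | m + 4, ih =>
        have : x ^ (m + 4) = d • x ^ (m + 2) - x ^ m := by
          rw [Algebra.smul_def, pow_add, hx]
          ring
        rw [this]
        exact sub_mem (S.smul_mem d (ih (m + 2) (by omega))) (ih m (by omega))
  rw [Algebra.adjoin_eq_span, Submodule.span_le]
  intro y hy
  obtain ⟨n, rfl⟩ := Submonoid.mem_closure_singleton.mp hy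
  exact hpow n

lemma Module.Basis.existsUnique_fin_four {R M : Type*} [Semiring R] [AddCommMonoid M]
    [Module R M]
    (b : Module.Basis (Fin 4) R M) (γ : M) :
    ∃! q : R × R × R × R, γ = q.1 • b 0 + q.2.1 • b 1 + q.2.2.1 • b 2 + q.2.2.2 • b 3 := by
  refine ⟨(b.repr γ 0, b.repr γ 1, b.repr γ 2, b.repr γ 3), ?_, ?_⟩
  · exact (b.sum_repr γ).symm.trans (Fin.sum_univ_four _)
  · rintro ⟨c₀, c₁, c₂, c₃⟩ rfl
    simp

/-- Let `f(x) = x⁸ + ax⁶ + bx⁴ + ax² + 1` be irreducible over `ℚ`, `α` a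
root, `K = ℚ(α)` with `ℤ[α] = 𝓞 K`. Let `M = ℚ(α² + α⁻²)` be the quadratic subfield of
`K`. Then `𝓞 K` is a free `𝓞 M`-module with basis `(1, α, α², α³)`; in particular every
`γ ∈ 𝓞 K` is uniquely `γ = C + Xα + Yα² + Zα³` with `C, X, Y, Z ∈ 𝓞 M`. -/
theorem stmt16 (a b : ℤ) (K : Type*) [Field K] [NumberField K]
    (hirr : Irreducible (X ^ 8 + C (a : ℚ) * X ^ 6 + C (b : ℚ) * X ^ 4 + C (a : ℚ) * X ^ 2 + 1 :
      Polynomial ℚ))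
    (α : 𝓞 K)
    (hroot : Polynomial.aeval α (X ^ 8 + C a * X ^ 6 + C b * X ^ 4 + C a * X ^ 2 + 1 :
      Polynomial ℤ) = 0)
    (hK : IntermediateField.adjoin ℚ {(α : K)} = ⊤)
    (hmono : Algebra.adjoin ℤ {α} = ⊤)
    (δ : K) (hδ : δ = (α : K) ^ 2 + ((α : K) ^ 2)⁻¹)
    (M : IntermediateField ℚ K) (hM : M = IntermediateField.adjoin ℚ {δ}) :
    (∃ bas : Module.Basis (Fin 4) (𝓞 M) (𝓞 K), ∀ i : Fin 4, bas i = α ^ (i : ℕ)) ∧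
    ∀ γ : 𝓞 K, ∃! q : (𝓞 M) × (𝓞 M) × (𝓞 M) × (𝓞 M),
      γ = algebraMap (𝓞 M) (𝓞 K) q.1 + algebraMap (𝓞 M) (𝓞 K) q.2.1 * α +
        algebraMap (𝓞 M) (𝓞 K) q.2.2.1 * α ^ 2 +
        algebraMap (𝓞 M) (𝓞 K) q.2.2.2 * α ^ 3 := by
  have hαK : (α : K) ^ 8 + a * (α : K) ^ 6 + b * (α : K) ^ 4 + a * (α : K) ^ 2 + 1 = 0 := by
    simpa using congrArg (algebraMap (𝓞 K) K) hroot
  have hδ_int : IsIntegral ℤ δ :=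
    hδ ▸ RingOfIntegers.isIntegral_sq_add_inv_sq_of_palindromic_octic hαK
  have hδM : δ ∈ M := hM ▸ IntermediateField.mem_adjoin_simple_self ℚ δ
  let d : 𝓞 M :=
    ⟨⟨δ, hδM⟩, (isIntegral_algebraMap_iff (algebraMap M K).injective).mp hδ_int⟩
  have hα4 : α ^ 4 = algebraMap (𝓞 M) (𝓞 K) d * α ^ 2 - 1 := by
    have hd : algebraMap (𝓞 K) K (algebraMap (𝓞 M) (𝓞 K) d) = δ := rfl
    ext
    simpa [hd, ← hδ] using
      pow_four_eq_sq_add_inv_sq_mul_sq_sub_one (ne_zero_of_palindromic_octic hαK)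
  have hspan : ⊤ ≤ Submodule.span (𝓞 M) (Set.range fun i : Fin 4 => α ^ (i : ℕ)) := by
    rw [← Algebra.top_toSubmodule, ← Algebra.adjoin_eq_top_of_adjoin_int_eq_top hmono]
    exact Algebra.adjoin_le_span_pow_fin_four hα4
  have hfinK : Module.finrank ℚ K = 8 := by
    rw [Module.finrank_eq_natDegree_of_adjoin_eq_top hirr (by monicity!) (by simpa using hαK) hK]
    compute_degree!
  have hfinM : Module.finrank ℚ M ≤ 2 := by
    subst hM
    refine IntermediateField.finrank_adjoin_le_two_of_quadratic (c := a) (d := b - 2) ?_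
    simpa [hδ] using sq_add_inv_sq_quadratic_of_palindromic_octic hαK
  have hdeg : 4 ≤ (minpoly M (α : K)).natDegree := by
    nlinarith [IntermediateField.finrank_eq_finrank_mul_natDegree_minpoly M hK]
  have hli : LinearIndependent (𝓞 M) fun i : Fin 4 => α ^ (i : ℕ) :=
    RingOfIntegers.linearIndependent_of_coe <| by
      simpa using linearIndependent_pow_of_le_natDegree (α : K) hdeg
  let bas := Module.Basis.mk hli hspan
  refine ⟨⟨bas, Module.Basis.mk_apply hli hspan⟩, fun γ => ?_⟩
  simpa [bas, Algebra.smul_def] using bas.existsUnique_fin_four γ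
end
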